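/- Let r₀ > 0 and let f : [r₀, ∞) → ℝ be a C¹ function satisfying lim_{r→∞} r · f(r)² = 0. Then ∫_{r₀}^∞ f(r)² dr ≤ 4 ∫_{r₀}^∞ (r − r₀)² (f'(r))² dr. -/

import Mathlib

open MeasureTheory Filter Set

/-! On `[a, b]` the square `(f + 2 (r - a) f')² ≥ 0` expands to
`f² ≤ 2 d/dr[(r - a) f²] + 4 (r - a)² f'²`, which integrates to
`∫_a^b f² ≤ 2 (b - a) f(b)² + 4 ∫_a^b (r - a)² f'²`.
As `b → ∞` the boundary term vanishes since `r f(r)² → 0`, and the integrals over `(a, b]`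
increase to those over `(a, ∞)`. -/

theorem integral_sq_le_of_hasDerivAt {a b : ℝ} (hab : a ≤ b) {f f' : ℝ → ℝ}
    (hf : ∀ r ∈ Icc a b, HasDerivAt f (f' r) r) (hf' : ContinuousOn f' (Icc a b)) :
    ∫ r in a..b, f r ^ 2 ≤ 2 * ((b - a) * f b ^ 2) + 4 * ∫ r in a..b, (r - a) ^ 2 * f' r ^ 2 := by
  rw [← uIcc_of_le hab] at hf hf'
  have hfc : ContinuousOn f (uIcc a b) := fun r hr => (hf r hr).continuousAt.continuousWithinAt
  set D := fun r => f r ^ 2 + (r - a) * (2 * f r * f' r)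
  have hDc : ContinuousOn D (uIcc a b) := by fun_prop
  have hftc : ∫ r in a..b, D r = (b - a) * f b ^ 2 := by
    rw [intervalIntegral.integral_eq_sub_of_hasDerivAt (f := fun r => (r - a) * f r ^ 2)
      (fun r hr => (((hasDerivAt_id r).sub_const a).mul ((hf r hr).fun_pow 2)).congr_deriv
        (by simp only [D, id]; push_cast; ring))
      hDc.intervalIntegrable]
    ring
  have hwc : ContinuousOn (fun r => (r - a) ^ 2 * f' r ^ 2) (uIcc a b) := by fun_prop
  have hpt : ∀ r, f r ^ 2 ≤ 2 * D r + 4 * ((r - a) ^ 2 * f' r ^ 2) := fun r => by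
    nlinarith [sq_nonneg (f r + 2 * (r - a) * f' r)]
  calc ∫ r in a..b, f r ^ 2
      ≤ ∫ r in a..b, (2 * D r + 4 * ((r - a) ^ 2 * f' r ^ 2)) :=
        intervalIntegral.integral_mono_on hab (hfc.pow 2).intervalIntegrable
          ((hDc.intervalIntegrable.const_mul 2).add (hwc.intervalIntegrable.const_mul 4))
          fun r _ => hpt r
    _ = 2 * ((b - a) * f b ^ 2) + 4 * ∫ r in a..b, (r - a) ^ 2 * f' r ^ 2 := by
        rw [intervalIntegral.integral_add (hDc.intervalIntegrable.const_mul 2)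
          (hwc.intervalIntegrable.const_mul 4), intervalIntegral.integral_const_mul,
          intervalIntegral.integral_const_mul, hftc]

theorem setLIntegral_sq_Ioc_le_of_hasDerivAt {a b : ℝ} (hab : a ≤ b) {f f' : ℝ → ℝ}
    (hf : ∀ r ∈ Icc a b, HasDerivAt f (f' r) r) (hf' : ContinuousOn f' (Icc a b)) :
    ∫⁻ r in Ioc a b, ENNReal.ofReal (f r ^ 2) ≤
      ENNReal.ofReal (2 * ((b - a) * f b ^ 2)) +
        ENNReal.ofReal 4 * ∫⁻ r in Ioc a b, ENNReal.ofReal ((r - a) ^ 2 * f' r ^ 2) := by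
  have hfc : ContinuousOn f (Icc a b) := fun r hr => (hf r hr).continuousAt.continuousWithinAt
  have ofReal_integral {g : ℝ → ℝ} (hg : ContinuousOn g (Icc a b)) (hg0 : ∀ r, 0 ≤ g r) :
      ENNReal.ofReal (∫ r in a..b, g r) = ∫⁻ r in Ioc a b, ENNReal.ofReal (g r) := by
    rw [intervalIntegral.integral_of_le hab]
    exact ofReal_integral_eq_lintegral_ofReal
      ((hg.integrableOn_compact isCompact_Icc).mono_set Ioc_subset_Icc_self)
      (.of_forall hg0)
  rw [← ofReal_integral (by fun_prop) (fun r => sq_nonneg _),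
    ← ofReal_integral (by fun_prop) (fun r => by positivity),
    ← ENNReal.ofReal_mul (by norm_num)]
  exact (ENNReal.ofReal_le_ofReal (integral_sq_le_of_hasDerivAt hab hf hf')).trans
    ENNReal.ofReal_add_le

theorem tendsto_setLIntegral_Ioc_atTop {μ : Measure ℝ} (a : ℝ) {g : ℝ → ENNReal}
    (hg : AEMeasurable g (μ.restrict (Ioi a))) :
    Tendsto (fun R => ∫⁻ r in Ioc a R, g r ∂μ) atTop (nhds (∫⁻ r in Ioi a, g r ∂μ)) := by
  have hcover : AECover (μ.restrict (Ioi a)) atTop Iic := aecover_Iic tendsto_id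
  simpa only [Measure.restrict_restrict measurableSet_Iic, Iic_inter_Ioi] using
    hcover.lintegral_tendsto_of_countably_generated hg

theorem tendsto_sub_mul_atTop_of_tendsto_mul (c : ℝ) {g : ℝ → ℝ}
    (hg : Tendsto (fun r => r * g r) atTop (nhds 0)) :
    Tendsto (fun r => (r - c) * g r) atTop (nhds 0) := by
  have hg0 : Tendsto g atTop (nhds 0) :=
    (hg.div_atTop tendsto_id).congr' <| (eventually_ne_atTop 0).mono fun r hr => by
      simp [mul_div_cancel_left₀ _ hr]
  simpa [sub_mul] using hg.sub (hg0.const_mul c)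

theorem hardy_inequality_endpoint_weight_general (r₀ : ℝ)
    (f f' : ℝ → ℝ)
    (hderiv : ∀ r ∈ Set.Ici r₀, HasDerivAt f (f' r) r)
    (hcont : ContinuousOn f' (Set.Ici r₀))
    (hlim : Tendsto (fun r : ℝ => r * (f r) ^ 2) atTop (nhds 0)) :
    ∫⁻ r in Set.Ioi r₀, ENNReal.ofReal ((f r) ^ 2) ≤
      ENNReal.ofReal 4 *
        ∫⁻ r in Set.Ioi r₀, ENNReal.ofReal ((r - r₀) ^ 2 * (f' r) ^ 2) := by
  set W := ∫⁻ r in Ioi r₀, ENNReal.ofReal ((r - r₀) ^ 2 * f' r ^ 2)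
  have hfc : ContinuousOn f (Ici r₀) := fun r hr => (hderiv r hr).continuousAt.continuousWithinAt
  have hlhs := tendsto_setLIntegral_Ioc_atTop (μ := volume) r₀
    (((hfc.pow 2).mono Ioi_subset_Ici_self).aemeasurable measurableSet_Ioi).ennreal_ofReal
  have hrhs : Tendsto (fun R => ENNReal.ofReal (2 * ((R - r₀) * f R ^ 2)) + ENNReal.ofReal 4 * W)
      atTop (nhds (ENNReal.ofReal 4 * W)) := by
    simpa using (ENNReal.tendsto_ofReal
      ((tendsto_sub_mul_atTop_of_tendsto_mul r₀ hlim).const_mul 2)).add_const _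
  refine le_of_tendsto_of_tendsto hlhs hrhs ?_
  filter_upwards [eventually_ge_atTop r₀] with R hR
  refine (setLIntegral_sq_Ioc_le_of_hasDerivAt hR (fun r hr => hderiv r hr.1)
    (hcont.mono Icc_subset_Ici_self)).trans ?_
  gcongr
  exact lintegral_mono_set Ioc_subset_Ioi_self

/-- Hardy inequality with weight vanishing at the left endpoint (Lemma 4.1(ii) of the paper). -/
theorem hardy_inequality_endpoint_weight (r₀ : ℝ) (hr₀ : 0 < r₀)
    (f f' : ℝ → ℝ)
    (hderiv : ∀ r ∈ Set.Ici r₀, HasDerivAt f (f' r) r)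
    (hcont : ContinuousOn f' (Set.Ici r₀))
    (hlim : Tendsto (fun r : ℝ => r * (f r) ^ 2) atTop (nhds 0)) :
    ∫⁻ r in Set.Ioi r₀, ENNReal.ofReal ((f r) ^ 2) ≤
      ENNReal.ofReal 4 *
        ∫⁻ r in Set.Ioi r₀, ENNReal.ofReal ((r - r₀) ^ 2 * (f' r) ^ 2) :=
  hardy_inequality_endpoint_weight_general r₀ f f' hderiv hcont hlim
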